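/- Let d ≥ 2 be an integer, n a positive integer, t₀ > 0, t > 0 and x̂ > 0 real numbers. Set ω = e^{2πi/(d+1)} and α = e^{iπ/(d+1)}. For a polynomial g ∈ ℂ[X], let ḡ denote the polynomial obtained from g by conjugating its coefficients. For polynomials f, g ∈ ℂ[X] define the sesquilinear form ⟨f, g⟩ = ∑_{ℓ=0}^{d} ∫_0^{x̂} ∫_0^∞ f(ω^ℓ x) · [ α·ḡ(ω^{−ℓ}·α·u)·exp( −(n/t₀)·( α·u·x + t·u^{d+1}/(d+1) − t·x^{d+1}/(d+1) ) ) − α^{−1}·ḡ(ω^{−ℓ}·α^{−1}·u)·exp( −(n/t₀)·( α^{−1}·u·x + t·u^{d+1}/(d+1) − t·x^{d+1}/(d+1) ) ) ] du dx. Then for all f, g ∈ ℂ[X]: t₀·⟨f, g′⟩ − n·⟨X·f, g⟩ + n·t·⟨f, X^d·g⟩ = 0, where g′ is the derivative of g and X·f, X^d·g denote multiplication by the monomials X and X^d. -/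

import Mathlib

/-!
Fix `ℓ` and `x`. On each ray of `Γ_{-ℓ}` we have `s = b u` with `b ^ (d + 1) = -1`, and the
combination `t₀ ⟨f, g'⟩ - n ⟨X f, g⟩ + n t ⟨f, X^d g⟩` of the inner `u`-integrals is
`f(ω^ℓ x) t₀ ω^ℓ` times the integral of `d/du [ḡ(b u) K(x, u)]`, `K` being the exponential
weight. Since `K` decays like `exp (-(n t / t₀) u^(d+1) / (d+1))`, only the boundary value at
`u = 0` survives, and this value, `ḡ(0) K(x, 0)`, is the same on both rays, so the two
contributions cancel. The same decay, uniform for `x` in compact sets, makes the inner integrals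
continuous in `x`, so the outer integrals may be combined linearly.
-/

open MeasureTheory Polynomial

/-- `ω = e^{2πi/(d+1)}`. -/
noncomputable def omC (d : ℕ) : ℂ := Complex.exp (2 * Real.pi * Complex.I / ((d : ℂ) + 1))

/-- `α = e^{iπ/(d+1)}`. -/
noncomputable def alphaC (d : ℕ) : ℂ := Complex.exp (Real.pi * Complex.I / ((d : ℂ) + 1))

/-- The sesquilinear form
`⟨f, g⟩ = ∑_{ℓ=0}^{d} ∫_0^{x̂} ∫_0^∞ f(ω^ℓ x) ·
  [ α·ḡ(ω^{-ℓ}αu)·e^{-(n/t₀)(αux + t u^{d+1}/(d+1) - t x^{d+1}/(d+1))}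
  - α^{-1}·ḡ(ω^{-ℓ}α^{-1}u)·e^{-(n/t₀)(α^{-1}ux + t u^{d+1}/(d+1) - t x^{d+1}/(d+1))} ] du dx`. -/
noncomputable def sesq (d n : ℕ) (t₀ t xhat : ℝ) (f g : Polynomial ℂ) : ℂ :=
  ∑ ℓ ∈ Finset.range (d + 1),
    ∫ x in (0 : ℝ)..xhat,
      ∫ u in Set.Ioi (0 : ℝ),
        Polynomial.eval (omC d ^ ℓ * (x : ℂ)) f *
          (alphaC d *
              Polynomial.eval (omC d ^ (-(ℓ : ℤ)) * alphaC d * (u : ℂ))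
                (g.map (starRingEnd ℂ)) *
              Complex.exp (-((n : ℂ) / (t₀ : ℂ)) *
                (alphaC d * (u : ℂ) * (x : ℂ) + (t : ℂ) * (u : ℂ) ^ (d + 1) / ((d : ℂ) + 1)
                  - (t : ℂ) * (x : ℂ) ^ (d + 1) / ((d : ℂ) + 1)))
            - (alphaC d)⁻¹ *
              Polynomial.eval (omC d ^ (-(ℓ : ℤ)) * (alphaC d)⁻¹ * (u : ℂ))
                (g.map (starRingEnd ℂ)) *
              Complex.exp (-((n : ℂ) / (t₀ : ℂ)) *
                ((alphaC d)⁻¹ * (u : ℂ) * (x : ℂ) + (t : ℂ) * (u : ℂ) ^ (d + 1) / ((d : ℂ) + 1)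
                  - (t : ℂ) * (x : ℂ) ^ (d + 1) / ((d : ℂ) + 1))))

open Filter Set Topology

lemma Polynomial.exists_norm_eval_le_mul_exp (P : ℂ[X]) :
    ∃ C, ∀ z : ℂ, ‖P.eval z‖ ≤ C * Real.exp ‖z‖ := by
  refine ⟨∑ i ∈ Finset.range (P.natDegree + 1), ‖P.coeff i‖ * i.factorial, fun z => ?_⟩
  rw [eval_eq_sum_range, Finset.sum_mul]
  refine (norm_sum_le _ _).trans (Finset.sum_le_sum fun i _ => ?_)
  have h := Real.pow_div_factorial_le_exp _ (norm_nonneg z) i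
  rw [div_le_iff₀ (by positivity)] at h
  rw [norm_mul, norm_pow, mul_assoc]
  gcongr
  linarith

lemma exists_mul_sub_mul_pow_le (s : ℝ) {κ : ℝ} (hκ : 0 < κ) {m : ℕ} (hm : 1 ≤ m) :
    ∃ B, ∀ u : ℝ, 0 ≤ u → s * u - κ * u ^ (m + 1) ≤ B := by
  refine ⟨|s| * max 1 (|s| / κ), fun u hu => ?_⟩
  have hsu : s * u ≤ |s| * u := mul_le_mul_of_nonneg_right (le_abs_self s) hu
  rcases le_total u (max 1 (|s| / κ)) with h | h
  · nlinarith [pow_nonneg hu (m + 1), abs_nonneg s]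
  · have h1 : 1 ≤ u := (le_max_left _ _).trans h
    have h2 : |s| ≤ κ * u := by
      have := (le_max_right _ _).trans h
      rwa [div_le_iff₀ hκ, mul_comm] at this
    have h3 : u ≤ u ^ m := le_self_pow₀ h1 (by omega)
    have : |s| * u ≤ κ * u ^ (m + 1) := by
      calc |s| * u ≤ κ * u * u := mul_le_mul_of_nonneg_right h2 hu
        _ ≤ κ * u ^ m * u := by gcongr
        _ = κ * u ^ (m + 1) := by ring
    nlinarith [abs_nonneg s, le_max_left 1 (|s| / κ)]

lemma omC_ne_zero (d : ℕ) : omC d ≠ 0 := Complex.exp_ne_zero _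

lemma omC_pow_succ (d : ℕ) : omC d ^ (d + 1) = 1 := by
  simpa [omC] using (Complex.isPrimitiveRoot_exp (d + 1) d.succ_ne_zero).pow_eq_one

lemma alphaC_pow_succ (d : ℕ) : alphaC d ^ (d + 1) = -1 := by
  have hD : (d : ℂ) + 1 ≠ 0 := Nat.cast_add_one_ne_zero d
  rw [alphaC, ← Complex.exp_nat_mul, ← Complex.exp_pi_mul_I]
  congr 1
  push_cast
  field_simp

lemma alphaC_inv_pow_succ (d : ℕ) : (alphaC d)⁻¹ ^ (d + 1) = -1 := by
  rw [inv_pow, alphaC_pow_succ, inv_neg, inv_one]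

lemma omC_zpow_neg_mul_pow_succ (d ℓ : ℕ) (z : ℂ) :
    (omC d ^ (-(ℓ : ℤ)) * z) ^ (d + 1) = z ^ (d + 1) := by
  rw [mul_pow, ← zpow_natCast (omC d ^ _), ← zpow_mul, mul_comm (-(ℓ : ℤ)), zpow_mul,
    zpow_natCast, omC_pow_succ, one_zpow, one_mul]

lemma omC_pow_mul_zpow_neg_mul (d ℓ : ℕ) (z : ℂ) :
    omC d ^ ℓ * (omC d ^ (-(ℓ : ℤ)) * z) = z := by
  rw [zpow_neg, zpow_natCast, mul_inv_cancel_left₀ (pow_ne_zero _ (omC_ne_zero d))]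

/-- The weight `e^{-(n/t₀)(s z - V(z) - V(s))}` at `z = ω^ℓ x` and `s = ω^{-ℓ} a u`, `a = α^{±1}`,
so that `s z = a u x`, `V(z) = t x^(d+1)/(d+1)` and `V(s) = -t u^(d+1)/(d+1)`. -/
noncomputable def sesqKernel (d n : ℕ) (t₀ t : ℝ) (a : ℂ) (x u : ℝ) : ℂ :=
  Complex.exp (-((n : ℂ) / (t₀ : ℂ)) *
    (a * (u : ℂ) * (x : ℂ) + (t : ℂ) * (u : ℂ) ^ (d + 1) / ((d : ℂ) + 1)
      - (t : ℂ) * (x : ℂ) ^ (d + 1) / ((d : ℂ) + 1)))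

noncomputable def rayIntegral (d n : ℕ) (t₀ t : ℝ) (P : ℂ[X]) (b a : ℂ) (x : ℝ) : ℂ :=
  ∫ u in Ioi (0 : ℝ), P.eval (b * u) * sesqKernel d n t₀ t a x u

section Kernel

variable {d n : ℕ} {t₀ t : ℝ}

lemma norm_sesqKernel (a : ℂ) (x u : ℝ) :
    ‖sesqKernel d n t₀ t a x u‖ =
      Real.exp (-(n / t₀) * a.re * u * x - n / t₀ * t * u ^ (d + 1) / (d + 1)
        + n / t₀ * t * x ^ (d + 1) / (d + 1)) := by
  rw [sesqKernel, Complex.norm_exp]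
  congr 1
  have h : -((n : ℂ) / (t₀ : ℂ)) *
      (a * (u : ℂ) * (x : ℂ) + (t : ℂ) * (u : ℂ) ^ (d + 1) / ((d : ℂ) + 1)
        - (t : ℂ) * (x : ℂ) ^ (d + 1) / ((d : ℂ) + 1))
      = ((-(n / t₀) * u * x : ℝ) : ℂ) * a
        + ((-(n / t₀ * t * u ^ (d + 1) / (d + 1)) + n / t₀ * t * x ^ (d + 1) / (d + 1) : ℝ)
          : ℂ) := by
    push_cast
    ring
  rw [h, Complex.add_re, Complex.re_ofReal_mul, Complex.ofReal_re]
  ring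

lemma sesqKernel_zero_right (a : ℂ) (x : ℝ) :
    sesqKernel d n t₀ t a x 0 = sesqKernel d n t₀ t 0 x 0 := by
  simp [sesqKernel]

lemma continuous_sesqKernel (a : ℂ) :
    Continuous fun p : ℝ × ℝ => sesqKernel d n t₀ t a p.1 p.2 := by
  unfold sesqKernel
  fun_prop

lemma continuous_eval_mul_sesqKernel (P : ℂ[X]) (b a : ℂ) :
    Continuous fun p : ℝ × ℝ => P.eval (b * p.2) * sesqKernel d n t₀ t a p.1 p.2 :=
  (P.continuous.comp (by fun_prop)).mul (continuous_sesqKernel a)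

lemma exists_norm_eval_mul_sesqKernel_le (hd : 1 ≤ d) (hn : 0 < n) (ht₀ : 0 < t₀) (ht : 0 < t)
    (P : ℂ[X]) (b a : ℂ) (M : ℝ) :
    ∃ C, ∀ x u : ℝ, |x| ≤ M → 0 ≤ u →
      ‖P.eval (b * u) * sesqKernel d n t₀ t a x u‖ ≤ C * Real.exp (-u) := by
  obtain ⟨C₀, hC₀⟩ := P.exists_norm_eval_le_mul_exp
  have hC₀0 : 0 ≤ C₀ := by simpa using (norm_nonneg _).trans (hC₀ 0)
  set c : ℝ := n / t₀
  have hc : 0 < c := div_pos (by exact_mod_cast hn) ht₀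
  obtain ⟨B, hB⟩ := exists_mul_sub_mul_pow_le (‖b‖ + c * |a.re| * M + 1)
    (κ := c * t / (d + 1)) (by positivity) hd
  refine ⟨C₀ * Real.exp (B + c * t * M ^ (d + 1) / (d + 1)), fun x u hx hu => ?_⟩
  have hP : ‖P.eval (b * u)‖ ≤ C₀ * Real.exp (‖b‖ * u) := by
    simpa [abs_of_nonneg hu] using hC₀ (b * u)
  have hlin : -c * a.re * u * x ≤ c * |a.re| * M * u := by
    have : c * |a.re| * u * |x| ≤ c * |a.re| * u * M := by gcongr
    have := neg_abs_le (c * a.re * u * x)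
    rw [abs_mul, abs_mul, abs_mul, abs_of_pos hc, abs_of_nonneg hu] at this
    linarith
  have hpow : x ^ (d + 1) ≤ M ^ (d + 1) :=
    (le_abs_self _).trans ((abs_pow x _).trans_le (pow_le_pow_left₀ (abs_nonneg x) hx _))
  have hexp : ‖b‖ * u + (-c * a.re * u * x - c * t * u ^ (d + 1) / (d + 1)
      + c * t * x ^ (d + 1) / (d + 1)) ≤ B + c * t * M ^ (d + 1) / (d + 1) + -u := by
    have h₁ := hB u hu
    have h₂ : c * t * x ^ (d + 1) / (d + 1) ≤ c * t * M ^ (d + 1) / (d + 1) := by gcongr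
    have h₃ : c * t * u ^ (d + 1) / (d + 1) = c * t / (d + 1) * u ^ (d + 1) := by ring
    linarith
  calc ‖P.eval (b * u) * sesqKernel d n t₀ t a x u‖
      ≤ C₀ * Real.exp (‖b‖ * u)
          * Real.exp (-c * a.re * u * x - c * t * u ^ (d + 1) / (d + 1)
          + c * t * x ^ (d + 1) / (d + 1)) := by
        rw [norm_mul, norm_sesqKernel]
        exact mul_le_mul_of_nonneg_right hP (Real.exp_pos _).le
    _ ≤ C₀ * Real.exp (B + c * t * M ^ (d + 1) / (d + 1) + -u) := by
        rw [mul_assoc, ← Real.exp_add]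
        gcongr
    _ = C₀ * Real.exp (B + c * t * M ^ (d + 1) / (d + 1)) * Real.exp (-u) := by
        rw [Real.exp_add]
        ring

lemma integrableOn_eval_mul_sesqKernel (hd : 1 ≤ d) (hn : 0 < n) (ht₀ : 0 < t₀) (ht : 0 < t)
    (P : ℂ[X]) (b a : ℂ) (x : ℝ) :
    IntegrableOn (fun u : ℝ => P.eval (b * u) * sesqKernel d n t₀ t a x u) (Ioi 0) := by
  obtain ⟨C, hC⟩ := exists_norm_eval_mul_sesqKernel_le hd hn ht₀ ht P b a |x|
  refine Integrable.mono' ((integrableOn_exp_neg_Ioi 0).const_mul C) ?_ ?_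
  · exact ((continuous_eval_mul_sesqKernel P b a).comp
      (Continuous.prodMk_right x)).aestronglyMeasurable
  · refine (ae_restrict_iff' measurableSet_Ioi).2 (Eventually.of_forall fun u hu => ?_)
    simpa using hC x u le_rfl (le_of_lt hu)

lemma tendsto_eval_mul_sesqKernel_atTop (hd : 1 ≤ d) (hn : 0 < n) (ht₀ : 0 < t₀) (ht : 0 < t)
    (P : ℂ[X]) (b a : ℂ) (x : ℝ) :
    Tendsto (fun u : ℝ => P.eval (b * u) * sesqKernel d n t₀ t a x u) atTop (𝓝 0) := by
  obtain ⟨C, hC⟩ := exists_norm_eval_mul_sesqKernel_le hd hn ht₀ ht P b a |x|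
  have hexp : Tendsto (fun u : ℝ => C * Real.exp (-u)) atTop (𝓝 0) := by
    simpa using (Real.tendsto_exp_neg_atTop_nhds_zero).const_mul C
  exact squeeze_zero_norm' (eventually_atTop.2 ⟨0, fun u hu => hC x u le_rfl hu⟩) hexp

lemma hasDerivAt_eval_mul_sesqKernel (P : ℂ[X]) (b a : ℂ) (x u : ℝ) :
    HasDerivAt (fun u : ℝ => P.eval (b * u) * sesqKernel d n t₀ t a x u)
      ((b * (derivative P).eval (b * u)
        - (n : ℂ) / t₀ * (a * x + t * (u : ℂ) ^ d) * P.eval (b * u))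
        * sesqKernel d n t₀ t a x u) u := by
  have hP : HasDerivAt (fun w : ℂ => P.eval (b * w)) ((derivative P).eval (b * u) * b) u :=
    (P.hasDerivAt (b * u)).comp (u : ℂ) ((hasDerivAt_id _).const_mul b |>.congr_deriv (mul_one b))
  have hE : HasDerivAt (fun w : ℂ => -((n : ℂ) / t₀) * (a * w * x + t * w ^ (d + 1) / (d + 1)
      - t * (x : ℂ) ^ (d + 1) / (d + 1)))
      (-((n : ℂ) / t₀) * (a * x + t * ((d + 1 : ℕ) * (u : ℂ) ^ d) / (d + 1))) u := by
    have hpow := ((hasDerivAt_pow (d + 1) (u : ℂ)).const_mul (t : ℂ)).div_const ((d : ℂ) + 1)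
    have := (((((hasDerivAt_id (u : ℂ)).const_mul a).mul_const (x : ℂ)).add hpow).sub_const
      ((t : ℂ) * (x : ℂ) ^ (d + 1) / ((d : ℂ) + 1))).const_mul (-((n : ℂ) / t₀))
    simpa using this
  refine ((hP.mul hE.cexp).comp_ofReal).congr_deriv ?_
  have hD : (d : ℂ) + 1 ≠ 0 := Nat.cast_add_one_ne_zero d
  simp only [sesqKernel]
  push_cast
  field_simp
  ring

lemma rayIntegral_add (hd : 1 ≤ d) (hn : 0 < n) (ht₀ : 0 < t₀) (ht : 0 < t)
    (P Q : ℂ[X]) (b a : ℂ) (x : ℝ) :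
    rayIntegral d n t₀ t (P + Q) b a x
      = rayIntegral d n t₀ t P b a x + rayIntegral d n t₀ t Q b a x := by
  simp only [rayIntegral, eval_add, add_mul]
  exact integral_add (integrableOn_eval_mul_sesqKernel hd hn ht₀ ht P b a x)
    (integrableOn_eval_mul_sesqKernel hd hn ht₀ ht Q b a x)

lemma rayIntegral_sub (hd : 1 ≤ d) (hn : 0 < n) (ht₀ : 0 < t₀) (ht : 0 < t)
    (P Q : ℂ[X]) (b a : ℂ) (x : ℝ) :
    rayIntegral d n t₀ t (P - Q) b a x
      = rayIntegral d n t₀ t P b a x - rayIntegral d n t₀ t Q b a x := by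
  simp only [rayIntegral, eval_sub, sub_mul]
  exact integral_sub (integrableOn_eval_mul_sesqKernel hd hn ht₀ ht P b a x)
    (integrableOn_eval_mul_sesqKernel hd hn ht₀ ht Q b a x)

lemma rayIntegral_C_mul (r : ℂ) (P : ℂ[X]) (b a : ℂ) (x : ℝ) :
    rayIntegral d n t₀ t (C r * P) b a x = r * rayIntegral d n t₀ t P b a x := by
  simp only [rayIntegral, eval_mul, eval_C, mul_assoc]
  exact integral_const_mul r _

/-- Integration by parts along a ray on which `s ^ (d + 1)` is negative real: the boundary term at
infinity vanishes, only the one at `u = 0` remains. -/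
lemma rayIntegral_deriv_eq_boundary (hd : 1 ≤ d) (hn : 0 < n) (ht₀ : 0 < t₀) (ht : 0 < t)
    (P : ℂ[X]) (β b : ℂ) (hb : b ^ (d + 1) = -1) (x : ℝ) :
    b * rayIntegral d n t₀ t
        (derivative P - C ((n : ℂ) / t₀ * β * x) * P + C ((n : ℂ) / t₀ * t) * (X ^ d * P))
        b (β * b) x
      = -(P.eval 0 * sesqKernel d n t₀ t (β * b) x 0) := by
  set Q := derivative P - C ((n : ℂ) / t₀ * β * x) * P + C ((n : ℂ) / t₀ * t) * (X ^ d * P)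
  have hderiv : ∀ u ∈ Ici (0 : ℝ), HasDerivAt
      (fun u : ℝ => P.eval (b * u) * sesqKernel d n t₀ t (β * b) x u)
      (b * (Q.eval (b * u) * sesqKernel d n t₀ t (β * b) x u)) u := by
    refine fun u _ => (hasDerivAt_eval_mul_sesqKernel P b (β * b) x u).congr_deriv ?_
    simp only [Q, eval_add, eval_sub, eval_mul, eval_C, eval_pow, eval_X]
    linear_combination (-(n : ℂ) / t₀ * t * (u : ℂ) ^ d * P.eval (b * u)
      * sesqKernel d n t₀ t (β * b) x u) * hb
  rw [rayIntegral, ← integral_const_mul, integral_Ioi_of_hasDerivAt_of_tendsto' hderiv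
    ((integrableOn_eval_mul_sesqKernel hd hn ht₀ ht Q b _ x).const_mul b)
    (tendsto_eval_mul_sesqKernel_atTop hd hn ht₀ ht P b _ x)]
  simp

lemma rayIntegral_structure (hd : 1 ≤ d) (hn : 0 < n) (ht₀ : 0 < t₀) (ht : 0 < t)
    (P : ℂ[X]) (a β b : ℂ) (hb : b ^ (d + 1) = -1) (ha : β * b = a) (x : ℝ) :
    a * (t₀ * rayIntegral d n t₀ t (derivative P) b a x
        - n * (β * x) * rayIntegral d n t₀ t P b a x
        + n * t * rayIntegral d n t₀ t (X ^ d * P) b a x)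
      = -(t₀ * β * (P.eval 0 * sesqKernel d n t₀ t a x 0)) := by
  subst ha
  have h := rayIntegral_deriv_eq_boundary hd hn ht₀ ht P β b hb x
  rw [rayIntegral_add hd hn ht₀ ht, rayIntegral_sub hd hn ht₀ ht, rayIntegral_C_mul,
    rayIntegral_C_mul] at h
  have ht₀' : (t₀ : ℂ) ≠ 0 := Complex.ofReal_ne_zero.2 ht₀.ne'
  have hc : (t₀ : ℂ) * ((n : ℂ) / t₀) = n := mul_div_cancel₀ _ ht₀'
  linear_combination (t₀ : ℂ) * β * h
    - β * b * (-(β * x) * rayIntegral d n t₀ t P b (β * b) x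
      + t * rayIntegral d n t₀ t (X ^ d * P) b (β * b) x) * hc

lemma continuous_rayIntegral (hd : 1 ≤ d) (hn : 0 < n) (ht₀ : 0 < t₀) (ht : 0 < t)
    (P : ℂ[X]) (b a : ℂ) : Continuous (rayIntegral d n t₀ t P b a) := by
  refine continuous_iff_continuousAt.2 fun x₀ => ?_
  obtain ⟨C, hC⟩ := exists_norm_eval_mul_sesqKernel_le hd hn ht₀ ht P b a (|x₀| + 1)
  have hF := continuous_eval_mul_sesqKernel (d := d) (n := n) (t₀ := t₀) (t := t) P b a
  have hnear : ∀ᶠ x in 𝓝 x₀, |x| < |x₀| + 1 :=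
    continuous_abs.continuousAt.eventually_lt continuousAt_const (lt_add_one _)
  refine continuousAt_of_dominated (bound := fun u => C * Real.exp (-u))
    (Eventually.of_forall fun x => (hF.comp (Continuous.prodMk_right x)).aestronglyMeasurable)
    (hnear.mono fun x hx => (ae_restrict_iff' measurableSet_Ioi).2
      (Eventually.of_forall fun u hu => hC x u hx.le (le_of_lt hu)))
    ((integrableOn_exp_neg_Ioi 0).const_mul C)
    (Eventually.of_forall fun u => (hF.comp (Continuous.prodMk_left u)).continuousAt)

end Kernel

/-- The `s`-integral over `Γ_{-ℓ}`, parametrised by `s = ω^{-ℓ} α^{±1} u` on the two rays. -/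
noncomputable def gammaIntegral (d n : ℕ) (t₀ t : ℝ) (P : ℂ[X]) (ℓ : ℕ) (x : ℝ) : ℂ :=
  alphaC d * rayIntegral d n t₀ t P (omC d ^ (-(ℓ : ℤ)) * alphaC d) (alphaC d) x
    - (alphaC d)⁻¹
      * rayIntegral d n t₀ t P (omC d ^ (-(ℓ : ℤ)) * (alphaC d)⁻¹) (alphaC d)⁻¹ x

section GammaIntegral

variable {d n : ℕ} {t₀ t : ℝ}

/-- The boundary terms at `s = 0` of the two rays cancel. -/
lemma gammaIntegral_structure (hd : 1 ≤ d) (hn : 0 < n) (ht₀ : 0 < t₀) (ht : 0 < t)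
    (P : ℂ[X]) (ℓ : ℕ) (x : ℝ) :
    t₀ * gammaIntegral d n t₀ t (derivative P) ℓ x
      - n * (omC d ^ ℓ * x) * gammaIntegral d n t₀ t P ℓ x
      + n * t * gammaIntegral d n t₀ t (X ^ d * P) ℓ x = 0 := by
  have hα := rayIntegral_structure hd hn ht₀ ht P (alphaC d) (omC d ^ ℓ) _
    ((omC_zpow_neg_mul_pow_succ d ℓ _).trans (alphaC_pow_succ d))
    (omC_pow_mul_zpow_neg_mul d ℓ _) x
  have hα' := rayIntegral_structure hd hn ht₀ ht P (alphaC d)⁻¹ (omC d ^ ℓ) _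
    ((omC_zpow_neg_mul_pow_succ d ℓ _).trans (alphaC_inv_pow_succ d))
    (omC_pow_mul_zpow_neg_mul d ℓ _) x
  rw [sesqKernel_zero_right] at hα hα'
  unfold gammaIntegral
  linear_combination hα - hα'

lemma continuous_gammaIntegral (hd : 1 ≤ d) (hn : 0 < n) (ht₀ : 0 < t₀) (ht : 0 < t)
    (P : ℂ[X]) (ℓ : ℕ) : Continuous (gammaIntegral d n t₀ t P ℓ) :=
  (continuous_const.mul (continuous_rayIntegral hd hn ht₀ ht P _ _)).sub
    (continuous_const.mul (continuous_rayIntegral hd hn ht₀ ht P _ _))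

lemma sesq_eq_sum_integral_gammaIntegral (hd : 1 ≤ d) (hn : 0 < n) (ht₀ : 0 < t₀) (ht : 0 < t)
    (xhat : ℝ) (f g : ℂ[X]) :
    sesq d n t₀ t xhat f g = ∑ ℓ ∈ Finset.range (d + 1), ∫ x in (0 : ℝ)..xhat,
      f.eval (omC d ^ ℓ * x) * gammaIntegral d n t₀ t (g.map (starRingEnd ℂ)) ℓ x := by
  refine Finset.sum_congr rfl fun ℓ _ => intervalIntegral.integral_congr fun x _ => ?_
  set G := g.map (starRingEnd ℂ)
  have hint := fun b a => integrableOn_eval_mul_sesqKernel hd hn ht₀ ht G b a x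
  rw [gammaIntegral, rayIntegral, rayIntegral, ← integral_const_mul, ← integral_const_mul,
    ← integral_sub ((hint _ _).const_mul _) ((hint _ _).const_mul _), ← integral_const_mul]
  refine integral_congr_ae (Eventually.of_forall fun u => ?_)
  simp only [sesqKernel]
  ring

end GammaIntegral

theorem stmt17_general (d : ℕ) (hd : 2 ≤ d) (n : ℕ) (hn : 0 < n) (t₀ t xhat : ℝ)
    (ht₀ : 0 < t₀) (ht : 0 < t) (f g : Polynomial ℂ) :
    (t₀ : ℂ) * sesq d n t₀ t xhat f (Polynomial.derivative g)
      - (n : ℂ) * sesq d n t₀ t xhat (Polynomial.X * f) g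
      + (n : ℂ) * (t : ℂ) * sesq d n t₀ t xhat f (Polynomial.X ^ d * g) = 0 := by
  have hd1 : 1 ≤ d := by omega
  set G := g.map (starRingEnd ℂ)
  have hint : ∀ (F P : ℂ[X]) (ℓ : ℕ) (c : ℂ), IntervalIntegrable
      (fun x : ℝ => c * (F.eval (omC d ^ ℓ * x) * gammaIntegral d n t₀ t P ℓ x))
      volume 0 xhat :=
    fun F P ℓ c => (continuous_const.mul ((F.continuous.comp (by fun_prop)).mul
      (continuous_gammaIntegral hd1 hn ht₀ ht P ℓ))).intervalIntegrable _ _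
  simp only [sesq_eq_sum_integral_gammaIntegral hd1 hn ht₀ ht, ← derivative_map,
    Polynomial.map_mul, Polynomial.map_pow, map_X, Finset.mul_sum, ← Finset.sum_sub_distrib,
    ← Finset.sum_add_distrib]
  refine Finset.sum_eq_zero fun ℓ _ => ?_
  rw [← intervalIntegral.integral_const_mul, ← intervalIntegral.integral_const_mul,
    ← intervalIntegral.integral_const_mul, ← intervalIntegral.integral_sub (hint _ _ _ _)
    (hint _ _ _ _), ← intervalIntegral.integral_add ((hint _ _ _ _).sub (hint _ _ _ _))
    (hint _ _ _ _)]
  refine (intervalIntegral.integral_congr fun x _ => ?_).trans intervalIntegral.integral_zero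
  simp only [eval_mul, eval_X]
  linear_combination f.eval (omC d ^ ℓ * x) * gammaIntegral_structure hd1 hn ht₀ ht G ℓ x

/-- The structure relation `t₀⟨f, g'⟩ - n⟨X·f, g⟩ + n·t⟨f, X^d·g⟩ = 0`. -/
theorem stmt17 (d : ℕ) (hd : 2 ≤ d) (n : ℕ) (hn : 0 < n) (t₀ t xhat : ℝ)
    (ht₀ : 0 < t₀) (ht : 0 < t) (hx : 0 < xhat) (f g : Polynomial ℂ) :
    (t₀ : ℂ) * sesq d n t₀ t xhat f (Polynomial.derivative g)
      - (n : ℂ) * sesq d n t₀ t xhat (Polynomial.X * f) g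
      + (n : ℂ) * (t : ℂ) * sesq d n t₀ t xhat f (Polynomial.X ^ d * g) = 0 :=
  stmt17_general d hd n hn t₀ t xhat ht₀ ht f g
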